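/- arXiv:1505.02053 — 2 statements merged into one kernel-verified Lean document; each statement's English description precedes it below -/
import Mathlib

section
/- In the Squier complex of a semigroup presentation P = ⟨Σ | R⟩, two oriented edges (p, a→b, q) and (r, c→d, s) are dual to the same hyperplane if and only if a = c and b = d as words in Σ⁺, and p = r and q = s modulo P. -/
namespace Squier

/-- The pair `{u,v}` occurs (in some order) among the defining relations `R`. -/
def Rel {α : Type*} (R : List α → List α → Prop) (u v : List α) : Prop :=
  R u v ∨ R v u

/-- One rewriting step: replace one occurrence of a subword `p` by `q`, where
`(p,q)` or `(q,p)` is a defining relation. -/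
def Step {α : Type*} (R : List α → List α → Prop) (x y : List α) : Prop :=
  ∃ a p q b : List α, Rel R p q ∧ x = a ++ p ++ b ∧ y = a ++ q ++ b

/-- Two words are equal modulo the presentation `⟨α ∣ R⟩`. -/
def EqMod {α : Type*} (R : List α → List α → Prop) : List α → List α → Prop :=
  Relation.ReflTransGen (Step R)

/-- An oriented edge of the Squier complex `S(P)` is a quadruple
`(x, u, v, y)` (written `(x, u→v, y)`) with `(u,v)` or `(v,u)` in `R`,
joining the vertices `xuy` and `xvy`. -/
abbrev SqEdge (α : Type*) := List α × List α × List α × List α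

/-- Two edges are parallel (opposite) sides of a square of the Squier
complex: a square `(x, u→v, y, u'→v', z)` arises from two disjoint relation
applications, and its two pairs of parallel edges are
`(x, u→v, y u' z) ∥ (x, u→v, y v' z)` and
`(x u y, u'→v', z) ∥ (x v y, u'→v', z)`. -/
def EdgePar {α : Type*} (R : List α → List α → Prop) :
    SqEdge α → SqEdge α → Prop := fun e f =>
  (∃ x u v y u' v' z, Rel R u v ∧ Rel R u' v' ∧
      e = (x, u, v, y ++ u' ++ z) ∧ f = (x, u, v, y ++ v' ++ z)) ∨
  (∃ x u' v' y u v z, Rel R u v ∧ Rel R u' v' ∧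
      e = (x ++ u' ++ y, u, v, z) ∧ f = (x ++ v' ++ y, u, v, z))

/-- Two edges are dual to the same hyperplane if they are related by the
equivalence generated by being parallel sides of a square. -/
def DualHyp {α : Type*} (R : List α → List α → Prop) : SqEdge α → SqEdge α → Prop :=
  Relation.ReflTransGen (EdgePar R)

theorem edgePar_left {α : Type} {R : List α → List α → Prop} {p p' a b q : List α}
    (h : Step R p p') (hab : Rel R a b) : EdgePar R (p, a, b, q) (p', a, b, q) := by
  obtain ⟨x, u', v', y, hrel, hp, hp'⟩ := h
  exact Or.inr ⟨x, u', v', y, a, b, q, hab, hrel, by simp [hp], by simp [hp']⟩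

theorem edgePar_right {α : Type} {R : List α → List α → Prop} {p a b q q' : List α}
    (h : Step R q q') (hab : Rel R a b) : EdgePar R (p, a, b, q) (p, a, b, q') := by
  obtain ⟨y, u', v', z, hrel, hq, hq'⟩ := h
  exact Or.inl ⟨p, a, b, y, u', v', z, hab, hrel, by simp [hq], by simp [hq']⟩

theorem dual_left {α : Type} {R : List α → List α → Prop} {p r a b q : List α}
    (h : EqMod R p r) (hab : Rel R a b) : DualHyp R (p, a, b, q) (r, a, b, q) := by
  induction h with
  | refl => exact Relation.ReflTransGen.refl
  | tail _ hstep ih => exact ih.tail (edgePar_left hstep hab)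

theorem dual_right {α : Type} {R : List α → List α → Prop} {p a b q s : List α}
    (h : EqMod R q s) (hab : Rel R a b) : DualHyp R (p, a, b, q) (p, a, b, s) := by
  induction h with
  | refl => exact Relation.ReflTransGen.refl
  | tail _ hstep ih => exact ih.tail (edgePar_right hstep hab)

/-- Two oriented edges `(p, a→b, q)` and `(r, c→d, s)` of the Squier complex
of `⟨α ∣ R⟩` are dual to the same hyperplane if and only if `a = c` and
`b = d` as words, and `p = r`, `q = s` modulo the presentation. -/
theorem stmt11 {α : Type} (R : List α → List α → Prop)
    (p a b q r c d s : List α) (hab : Rel R a b) (hcd : Rel R c d) :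
    DualHyp R (p, a, b, q) (r, c, d, s) ↔
      a = c ∧ b = d ∧ EqMod R p r ∧ EqMod R q s := by
  constructor
  · intro h
    have key : ∀ e : SqEdge α, DualHyp R (p, a, b, q) e →
        ∃ p' q', e = (p', a, b, q') ∧ EqMod R p p' ∧ EqMod R q q' := by
      intro e he
      induction he with
      | refl => exact ⟨p, q, rfl, Relation.ReflTransGen.refl, Relation.ReflTransGen.refl⟩
      | tail _ hpar ih =>
        obtain ⟨p', q', rfl, hp, hq⟩ := ih
        rcases hpar with ⟨x, u, v, y, u', v', z, _, hrel, he, hf⟩ |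
            ⟨x, u', v', y, u, v, z, _, hrel, he, hf⟩
        · obtain ⟨rfl, rfl, rfl, rfl⟩ : p' = x ∧ a = u ∧ b = v ∧ q' = y ++ u' ++ z := by
            simpa using he
          exact ⟨p', y ++ v' ++ z, hf, hp, hq.tail ⟨y, u', v', z, hrel, rfl, rfl⟩⟩
        · obtain ⟨rfl, rfl, rfl, rfl⟩ : p' = x ++ u' ++ y ∧ a = u ∧ b = v ∧ q' = z := by
            simpa using he
          exact ⟨x ++ v' ++ y, q', hf, hp.tail ⟨x, u', v', y, hrel, rfl, rfl⟩, hq⟩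
    obtain ⟨p', q', heq, hp, hq⟩ := key _ h
    obtain ⟨rfl, rfl, rfl, rfl⟩ : r = p' ∧ c = a ∧ d = b ∧ s = q' := by
      simpa using heq
    exact ⟨rfl, rfl, hp, hq⟩
  · rintro ⟨rfl, rfl, hp, hq⟩
    exact (dual_left hp hab).trans (dual_right hq hab)


end Squier
end

section
/- A hyperplane of the Squier complex S(P) of a semigroup presentation P self-intersects (i.e., is dual to two adjacent edges of a common square) if and only if it is dual to an edge of the form (a, p→q, bpc) where a = apb and c = bpc modulo P. -/
namespace Squier

/-- A hyperplane (given by one of its dual edges `e`) self-intersects if it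
is dual to two adjacent (non-parallel) edges of a common square
`(x, u→v, y, u'→v', z)`. -/
def SelfIntersects {α : Type*} (R : List α → List α → Prop) (e : SqEdge α) : Prop :=
  ∃ x u v y u' v' z, Rel R u v ∧ Rel R u' v' ∧
    DualHyp R e (x, u, v, y ++ u' ++ z) ∧
    DualHyp R e (x ++ u ++ y, u', v', z)

lemma step_symm {α : Type*} {R : List α → List α → Prop} {x y : List α}
    (h : Step R x y) : Step R y x := by
  obtain ⟨a, p, q, b, hpq, hx, hy⟩ := h
  exact ⟨a, q, p, b, hpq.symm, hy, hx⟩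

lemma eqMod_symm {α : Type*} {R : List α → List α → Prop} {x y : List α}
    (h : EqMod R x y) : EqMod R y x :=
  (@Relation.ReflTransGen.stdSymm _ _ ⟨fun _ _ => step_symm⟩).symm _ _ h

lemma dualHyp_components {α : Type*} {R : List α → List α → Prop} {e f : SqEdge α}
    (h : DualHyp R e f) :
    e.2.1 = f.2.1 ∧ e.2.2.1 = f.2.2.1 ∧ EqMod R e.1 f.1 ∧ EqMod R e.2.2.2 f.2.2.2 := by
  induction h with
  | refl => exact ⟨rfl, rfl, .refl, .refl⟩
  | tail _ hpar ih =>
    obtain ⟨h1, h2, h3, h4⟩ := ih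
    rcases hpar with ⟨x, u, v, y, u', v', z, huv, hu'v', he, hf⟩ |
        ⟨x, u', v', y, u, v, z, huv, hu'v', he, hf⟩ <;> subst he <;> subst hf
    · exact ⟨h1, h2, h3, h4.tail ⟨y, u', v', z, hu'v', rfl, rfl⟩⟩
    · exact ⟨h1, h2, h3.tail ⟨x, u', v', y, hu'v', rfl, rfl⟩, h4⟩

lemma dualHyp_of {α : Type*} {R : List α → List α → Prop} {u v x x' y y' : List α}
    (h₀ : Rel R u v) (hx : EqMod R x x') (hy : EqMod R y y') :
    DualHyp R (x, u, v, y) (x', u, v, y') := by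
  have hleft : DualHyp R (x, u, v, y) (x', u, v, y) := by
    induction hx with
    | refl => exact .refl
    | tail _ hstep ih =>
      obtain ⟨a, p, q, b, hpq, h1, h2⟩ := hstep
      exact ih.tail (Or.inr ⟨a, p, q, b, u, v, y, h₀, hpq, by rw [h1], by rw [h2]⟩)
  refine hleft.trans ?_
  induction hy with
  | refl => exact .refl
  | tail _ hstep ih =>
    obtain ⟨a, p, q, b, hpq, h1, h2⟩ := hstep
    exact ih.tail (Or.inl ⟨x', u, v, a, p, q, b, h₀, hpq, by rw [h1], by rw [h2]⟩)

/-- A hyperplane of the Squier complex self-intersects if and only if it is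
dual to an edge of the form `(a, p→q, bpc)` where `a = apb` and `c = bpc`
modulo the presentation. -/
theorem stmt13 {α : Type} (R : List α → List α → Prop)
    (x₀ u₀ v₀ y₀ : List α) (h₀ : Rel R u₀ v₀) :
    SelfIntersects R (x₀, u₀, v₀, y₀) ↔
      ∃ a p q b c : List α, Rel R p q ∧
        DualHyp R (x₀, u₀, v₀, y₀) (a, p, q, b ++ p ++ c) ∧
        EqMod R a (a ++ p ++ b) ∧ EqMod R c (b ++ p ++ c) := by
  constructor
  · rintro ⟨x, u, v, y, u', v', z, hr, hr', h1, h2⟩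
    obtain ⟨hu, hv, hx1, hy1⟩ := dualHyp_components h1
    obtain ⟨hu', hv', hx2, hy2⟩ := dualHyp_components h2
    simp only at hu hv hx1 hy1 hu' hv' hx2 hy2
    subst hu hv hu' hv'
    refine ⟨x, u₀, v₀, y, z, h₀, dualHyp_of h₀ hx1 hy1, ?_, ?_⟩
    · exact (eqMod_symm hx1).trans hx2
    · exact (eqMod_symm hy2).trans hy1
  · rintro ⟨a, p, q, b, c, hpq, hdual, ha, hc⟩
    obtain ⟨hu, hv, hxa, hyb⟩ := dualHyp_components hdual
    simp only at hu hv hxa hyb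
    subst hu hv
    exact ⟨a, u₀, v₀, b, u₀, v₀, c, h₀, h₀, hdual,
      dualHyp_of h₀ (hxa.trans ha) (hyb.trans (eqMod_symm hc))⟩

end Squier
end
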